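/- Let K be a nonempty compact subset of H². Then w_F(K, i) ≤ Metric.diam K for every ideal point i ∈ ℝ ∪ {∞}, and there exists an ideal point i ∈ ℝ ∪ {∞} with w_F(K, i) = Metric.diam K; that is, the maximum of the Fillmore width of K over all ideal points equals the diameter of K. -/

import Mathlib

open UpperHalfPlane

/-- The Busemann-type function attached to an ideal point of the hyperbolic
plane: ideal points are `ℝ ∪ {∞}`, encoded as `Option ℝ` with `none = ∞`.
The horoballs at the ideal point `i` are the superlevel sets `{z : s ≤ beta i z}`. -/
noncomputable def beta : Option ℝ → UpperHalfPlane → ℝ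
  | none, z => z.im
  | some b, z => z.im / ((z.re - b) ^ 2 + z.im ^ 2)

/-- The Fillmore width of a (nonempty compact) set `K` at the ideal point `i`:
the width of the horospherical strip between the two supporting horospheres
of `K` at `i`. -/
noncomputable def fillmoreWidth (K : Set UpperHalfPlane) (i : Option ℝ) : ℝ :=
  Real.log (sSup (beta i '' K)) - Real.log (sInf (beta i '' K))

theorem core_le (a c rz rw b E : ℝ) (ha : 0 < a) (hc : 0 < c) (hE1 : 1 ≤ E)
    (hE2 : a ≤ E * c)
    (hC : E * ((rz - rw)^2 + a^2 + c^2) = (E^2 + 1) * a * c) :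
    a * ((rw - b)^2 + c^2) ≤ E * c * ((rz - b)^2 + a^2) := by
  have hE0 : (0:ℝ) < E := lt_of_lt_of_le one_pos hE1
  have key : (E*c - a) * (E*c*((rz-b)^2+a^2) - a*((rw-b)^2+c^2)) =
      ((E*c-a)*b - (E*c*rz - a*rw))^2
        + a*c*((E^2+1)*a*c - E*((rz-rw)^2+a^2+c^2)) := by ring
  rw [hC, sub_self, mul_zero, add_zero] at key
  rcases eq_or_lt_of_le hE2 with h | h
  · have hd2 : E * (rz - rw)^2 = 0 := by linear_combination hC + (c - E*a) * h
    subst h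
    have hE2' : 1 ≤ E^2 := by nlinarith
    nlinarith [mul_nonneg (mul_nonneg (mul_pos hE0 hc).le (sq_nonneg c))
      (sub_nonneg.2 hE2'), sq_nonneg (rz - b), sq_nonneg (rw - b)]
  · nlinarith [key, sq_nonneg ((E*c-a)*b - (E*c*rz - a*rw)), h]

theorem core_eq (a c rz rw E : ℝ) (ha : 0 < a) (hc : 0 < c)
    (h : a < E * c)
    (hC : E * ((rz - rw)^2 + a^2 + c^2) = (E^2 + 1) * a * c) :
    a * ((rw - (E*c*rz - a*rw)/(E*c - a))^2 + c^2)
      = E * c * ((rz - (E*c*rz - a*rw)/(E*c - a))^2 + a^2) := by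
  set b := (E*c*rz - a*rw)/(E*c - a) with hb0
  have hne : E*c - a ≠ 0 := by linarith
  have hb : (E*c - a)*b - (E*c*rz - a*rw) = 0 := by
    rw [hb0]; field_simp; ring
  have key : (E*c - a) * (E*c*((rz-b)^2+a^2) - a*((rw-b)^2+c^2)) =
      ((E*c-a)*b - (E*c*rz - a*rw))^2
        + a*c*((E^2+1)*a*c - E*((rz-rw)^2+a^2+c^2)) := by ring
  rw [hC, sub_self, mul_zero, add_zero, hb] at key
  simp only [ne_eq, zero_pow, OfNat.ofNat_ne_zero, not_false_eq_true] at key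
  rcases mul_eq_zero.mp key with h1 | h2
  · exact absurd h1 hne
  · linarith

/-- the cosh identity in polynomial form -/
theorem coshC (z w : ℍ) :
    Real.exp (dist z w) * ((z.re - w.re)^2 + z.im^2 + w.im^2)
      = (Real.exp (dist z w)^2 + 1) * z.im * w.im := by
  have h1 := cosh_dist' z w
  rw [Real.cosh_eq, Real.exp_neg] at h1
  have hE0 : Real.exp (dist z w) ≠ 0 := (Real.exp_pos _).ne'
  have ha : z.im ≠ 0 := z.im_pos.ne'
  have hc : w.im ≠ 0 := w.im_pos.ne'
  field_simp at h1
  nlinarith [h1]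

theorem im_le (z w : ℍ) : z.im ≤ Real.exp (dist z w) * w.im := by
  have h := dist_log_im_le z w
  rw [Real.dist_eq] at h
  have h2 : Real.log z.im - Real.log w.im ≤ dist z w := (le_abs_self _).trans h
  calc z.im = Real.exp (Real.log z.im) := (Real.exp_log z.im_pos).symm
    _ ≤ Real.exp (dist z w + Real.log w.im) := Real.exp_le_exp.2 (by linarith)
    _ = Real.exp (dist z w) * w.im := by rw [Real.exp_add, Real.exp_log w.im_pos]

theorem denom_pos (z : ℍ) (b : ℝ) : 0 < (z.re - b)^2 + z.im^2 :=
  add_pos_of_nonneg_of_pos (sq_nonneg _) (pow_pos z.im_pos 2)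

theorem beta_pos (i : Option ℝ) (z : ℍ) : 0 < beta i z := by
  cases i with
  | none => exact z.im_pos
  | some b => exact div_pos z.im_pos (denom_pos z b)

theorem beta_continuous (i : Option ℝ) : Continuous (beta i) := by
  cases i with
  | none => exact UpperHalfPlane.continuous_im
  | some b =>
    exact UpperHalfPlane.continuous_im.div
      (((UpperHalfPlane.continuous_re.sub continuous_const).pow 2).add
        (UpperHalfPlane.continuous_im.pow 2))
      (fun z => (denom_pos z b).ne')

/-- log ratio helper -/
theorem log_ratio {a c Dz Dw E : ℝ} (ha : 0 < a) (hc : 0 < c) (hDz : 0 < Dz)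
    (hDw : 0 < Dw) (hE : 0 < E) (h : a * Dw = E * c * Dz) :
    Real.log (a / Dz) - Real.log (c / Dw) = Real.log E := by
  rw [Real.log_div ha.ne' hDz.ne', Real.log_div hc.ne' hDw.ne']
  have h2 : Real.log (a * Dw) = Real.log (E * c * Dz) := by rw [h]
  rw [Real.log_mul ha.ne' hDw.ne', Real.log_mul (mul_pos hE hc).ne' hDz.ne',
    Real.log_mul hE.ne' hc.ne'] at h2
  linarith

theorem log_ratio_le {a c Dz Dw E : ℝ} (ha : 0 < a) (hc : 0 < c) (hDz : 0 < Dz)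
    (hDw : 0 < Dw) (hE : 0 < E) (h : a * Dw ≤ E * c * Dz) :
    Real.log (a / Dz) - Real.log (c / Dw) ≤ Real.log E := by
  rw [Real.log_div ha.ne' hDz.ne', Real.log_div hc.ne' hDw.ne']
  have h2 : Real.log (a * Dw) ≤ Real.log (E * c * Dz) :=
    Real.log_le_log (mul_pos ha hDw) h
  rw [Real.log_mul ha.ne' hDw.ne', Real.log_mul (mul_pos hE hc).ne' hDz.ne',
    Real.log_mul hE.ne' hc.ne'] at h2
  linarith

theorem lemA (i : Option ℝ) (z w : ℍ) :
    Real.log (beta i z) - Real.log (beta i w) ≤ dist z w := by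
  cases i with
  | none =>
    have h := dist_log_im_le z w
    rw [Real.dist_eq] at h
    exact (le_abs_self _).trans h
  | some b =>
    have hcore := core_le z.im w.im z.re w.re b (Real.exp (dist z w)) z.im_pos w.im_pos
      (Real.one_le_exp dist_nonneg) (im_le z w) (coshC z w)
    have := log_ratio_le z.im_pos w.im_pos (denom_pos z b) (denom_pos w b)
      (Real.exp_pos _) (by rw [mul_assoc] at hcore ⊢; linarith [hcore])
    simpa [beta, Real.log_exp] using this

theorem lemB (z w : ℍ) :
    ∃ i : Option ℝ, Real.log (beta i z) - Real.log (beta i w) = dist z w := by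
  set E := Real.exp (dist z w) with hE
  rcases eq_or_lt_of_le (im_le z w) with h | h
  · refine ⟨none, ?_⟩
    simp only [beta]
    rw [h, Real.log_mul (Real.exp_pos _).ne' w.im_pos.ne', Real.log_exp]
    ring
  · refine ⟨some ((E * w.im * z.re - z.im * w.re) / (E * w.im - z.im)), ?_⟩
    have hcore := core_eq z.im w.im z.re w.re E z.im_pos w.im_pos h (coshC z w)
    have key := log_ratio z.im_pos w.im_pos
      (denom_pos z _) (denom_pos w _) (Real.exp_pos (dist z w)) hcore
    simp only [beta]
    rw [key]
    exact Real.log_exp _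

theorem exists_dist_eq_diam {K : Set ℍ} (hne : K.Nonempty) (hcp : IsCompact K) :
    ∃ z ∈ K, ∃ w ∈ K, dist z w = Metric.diam K := by
  have hcont : Continuous fun p : ℍ × ℍ => dist p.1 p.2 := continuous_dist
  obtain ⟨p, hpK, hp⟩ := (hcp.prod hcp).exists_isMaxOn (hne.prod hne)
    hcont.continuousOn
  refine ⟨p.1, hpK.1, p.2, hpK.2, ?_⟩
  refine le_antisymm (Metric.dist_le_diam_of_mem hcp.isBounded hpK.1 hpK.2) ?_
  refine Metric.diam_le_of_forall_dist_le dist_nonneg fun x hx y hy => ?_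
  have := hp (Set.mk_mem_prod hx hy)
  exact this

/-- for a nonempty compact subset `K` of the hyperbolic plane,
the Fillmore width at any ideal point is at most the diameter of `K`, and the
maximum over all ideal points of the Fillmore width equals the diameter. -/
theorem stmt_12 (K : Set UpperHalfPlane) (hKne : K.Nonempty)
    (hKcp : IsCompact K) :
    (∀ i : Option ℝ, fillmoreWidth K i ≤ Metric.diam K) ∧
      ∃ i : Option ℝ, fillmoreWidth K i = Metric.diam K := by
  have part1 : ∀ i : Option ℝ, fillmoreWidth K i ≤ Metric.diam K := by
    intro i
    have hScp : IsCompact (beta i '' K) := hKcp.image (beta_continuous i)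
    have hSne : (beta i '' K).Nonempty := hKne.image _
    obtain ⟨zM, hzM, hM⟩ := hScp.sSup_mem hSne
    obtain ⟨zm, hzm, hm⟩ := hScp.sInf_mem hSne
    rw [fillmoreWidth, ← hM, ← hm]
    exact (lemA i zM zm).trans (Metric.dist_le_diam_of_mem hKcp.isBounded hzM hzm)
  refine ⟨part1, ?_⟩
  obtain ⟨z, hz, w, hw, hd⟩ := exists_dist_eq_diam hKne hKcp
  obtain ⟨i, hi⟩ := lemB z w
  refine ⟨i, le_antisymm (part1 i) ?_⟩
  have hScp : IsCompact (beta i '' K) := hKcp.image (beta_continuous i)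
  have hSne : (beta i '' K).Nonempty := hKne.image _
  obtain ⟨z0, hz0, h0⟩ := hScp.sInf_mem hSne
  have hle1 : Real.log (beta i z) ≤ Real.log (sSup (beta i '' K)) :=
    Real.log_le_log (beta_pos i z) (le_csSup hScp.bddAbove ⟨z, hz, rfl⟩)
  have hle2 : Real.log (sInf (beta i '' K)) ≤ Real.log (beta i w) := by
    refine Real.log_le_log ?_ (csInf_le hScp.bddBelow ⟨w, hw, rfl⟩)
    rw [← h0]; exact beta_pos i z0
  rw [fillmoreWidth, ← hd, ← hi]
  linarith
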